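/- arXiv:1904.07136 — 2 statements merged into one kernel-verified Lean document; each statement's English description precedes it below -/
import Mathlib

section
/- Let f : A ⇀ B be a PCM morphism with compatibility relation ⊥_f, and let R be a compatibility relation on A. Define the restriction (f/R)(x) = f(x) if x R 1_A and undefined otherwise, and define x ⊥_{f/R} y iff (x ⊥_f y and x R y). Then ⊥_{f/R} is a compatibility relation on A, and f/R together with ⊥_{f/R} is a PCM morphism from A to B. -/
/-- A partial commutative monoid structure: a partial binary operation
(encoded with `Option`) together with a unit element. -/
structure PartialOp (M : Type) where
  op : M → M → Option M
  one : M

/-- `x ⊥ y`: the join `x • y` is defined. -/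
def PartialOp.Defined {M : Type} (P : PartialOp M) (x y : M) : Prop :=
  (P.op x y).isSome

/-- The PCM laws: commutativity (including of definedness), unit, and
partial associativity. -/
structure IsPCM {M : Type} (P : PartialOp M) : Prop where
  comm : ∀ x y, P.op x y = P.op y x
  one_op : ∀ x, P.op P.one x = some x
  assoc : ∀ x y z xy w, P.op x y = some xy → P.op xy z = some w →
    ∃ yz, P.op y z = some yz ∧ P.op x yz = some w
/-- A compatibility relation on a PCM. -/
structure IsCompatRel {M : Type} (P : PartialOp M) (R : M → M → Prop) : Prop where
  unitary : R P.one P.one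
  symm_iff : ∀ x y, R x y ↔ R y x
  compat : ∀ x y, R x y → (P.op x y).isSome
  unital : ∀ x y, R x y → R x P.one
  assoc : ∀ x y z xy, R x y → P.op x y = some xy → R xy z →
    R y z ∧ ∃ yz, P.op y z = some yz ∧ R x yz
/-- A PCM morphism `φ : A ⇀ B` with associated compatibility relation `⊥_φ`:
`φ 1 = 1`, and whenever `x ⊥_φ y`, both `φ x` and `φ y` are defined,
`φ x ⊥_B φ y`, and `φ (x • y) = φ x • φ y`. -/
structure IsPCMMorphism {A B : Type} (PA : PartialOp A) (PB : PartialOp B)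
    (φ : A → Option B) (Rφ : A → A → Prop) : Prop where
  compatRel : IsCompatRel PA Rφ
  map_one : φ PA.one = some PB.one
  map_op : ∀ x y, Rφ x y → ∃ bx bY xy bxy,
    φ x = some bx ∧ φ y = some bY ∧ PA.op x y = some xy ∧
    PB.op bx bY = some bxy ∧ φ xy = some bxy

open scoped Classical in
/-- The restriction of a morphism `f` to a compatibility relation `R`:
`(f/R) x = f x` if `x R 1_A`, undefined otherwise. -/
noncomputable def pcmRestrictFun {A B : Type} (PA : PartialOp A)
    (f : A → Option B) (R : A → A → Prop) : A → Option B :=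
  fun x => if R x PA.one then f x else none

/-- `x ⊥_{f/R} y` iff `x ⊥_f y` and `x R y`. -/
def pcmRestrictRel {A : Type} (Rf R : A → A → Prop) : A → A → Prop :=
  fun x y => Rf x y ∧ R x y

/-- helper: if `R x y` and `x • y = xy` then `R xy 1`. -/
lemma compat_op_one {A : Type} {PA : PartialOp A} (hA : IsPCM PA)
    {R : A → A → Prop} (hR : IsCompatRel PA R) {x y xy : A}
    (h : R x y) (hop : PA.op x y = some xy) : R xy PA.one := by
  have h1x : R PA.one x := (hR.symm_iff x PA.one).mp (hR.unital x y h)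
  obtain ⟨_, yz, hyz, h1yz⟩ := hR.assoc PA.one x y x h1x (hA.one_op x) h
  rw [hop] at hyz
  cases hyz
  exact (hR.symm_iff PA.one xy).mp h1yz

/-- the restriction of a PCM morphism to a compatibility
relation is a PCM morphism, with compatibility relation `⊥_{f/R}`. -/
theorem pcm_morphism_restrict {A B : Type}
    (PA : PartialOp A) (PB : PartialOp B) (hA : IsPCM PA) (hB : IsPCM PB)
    (f : A → Option B) (Rf : A → A → Prop)
    (hf : IsPCMMorphism PA PB f Rf)
    (R : A → A → Prop) (hR : IsCompatRel PA R) :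
    IsCompatRel PA (pcmRestrictRel Rf R) ∧
    IsPCMMorphism PA PB (pcmRestrictFun PA f R) (pcmRestrictRel Rf R) := by
  have hRf := hf.compatRel
  have hcr : IsCompatRel PA (pcmRestrictRel Rf R) := by
    constructor
    · exact ⟨hRf.unitary, hR.unitary⟩
    · intro x y
      constructor <;> rintro ⟨h1, h2⟩ <;>
        exact ⟨(hRf.symm_iff _ _).mp h1, (hR.symm_iff _ _).mp h2⟩
    · rintro x y ⟨h1, _⟩; exact hRf.compat x y h1
    · rintro x y ⟨h1, h2⟩; exact ⟨hRf.unital x y h1, hR.unital x y h2⟩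
    · rintro x y z xy ⟨h1, h2⟩ hop ⟨h3, h4⟩
      obtain ⟨ha1, yz, hyz, ha2⟩ := hRf.assoc x y z xy h1 hop h3
      obtain ⟨hb1, yz', hyz', hb2⟩ := hR.assoc x y z xy h2 hop h4
      rw [hyz] at hyz'; cases hyz'
      exact ⟨⟨ha1, hb1⟩, yz, hyz, ha2, hb2⟩
  refine ⟨hcr, hcr, ?_, ?_⟩
  · simp [pcmRestrictFun, hR.unitary, hf.map_one]
  · rintro x y ⟨h1, h2⟩
    obtain ⟨bx, bY, xy, bxy, hfx, hfy, hop, hbop, hfxy⟩ := hf.map_op x y h1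
    refine ⟨bx, bY, xy, bxy, ?_, ?_, hop, hbop, ?_⟩
    · simp [pcmRestrictFun, hR.unital x y h2, hfx]
    · simp [pcmRestrictFun, hR.unital y x ((hR.symm_iff x y).mp h2), hfy]
    · simp [pcmRestrictFun, compat_op_one hA hR h2 hop, hfxy]
end

section
/- Consider tuples (τ_s, τ_o, π_s, π_o, α_s, α_o) where τ_s, τ_o are histories, π_s, π_o ∈ ℕ, and α_s, α_o ∈ O. Say Inv holds of such a tuple iff: ω τ_s ↔ (α_s = own); ω τ_o ↔ (α_o = own); π_s = 1 if α_s = own and π_s = 0 otherwise; π_o = 1 if α_o = own and π_o = 0 otherwise; and τ_s ⊥_ω τ_o. Suppose Inv holds of (τ_s, τ_o, π_s, π_o, α_s, α_o) and the coupled unlock/close transition fires: ω(τ_s ⊎ τ_o) holds, π_s > 0, α_s = own, and the post-state is τ_s' = τ_s ⊎ (fresh(τ_s ⊎ τ_o) ↦ U), π_s' = π_s − 1, α_s' = ōwn, with τ_o, π_o, α_o unchanged. Then τ_s' is disjoint from τ_o, and Inv holds of the post-state; in particular τ_s' ⊥_ω τ_o. -/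
/-- The two operations recorded in lock histories. -/
inductive LU | L | U deriving DecidableEq

/-- A history: a finite map from positive timestamps to `{L, U}`. -/
abbrev Hist := Finmap (fun _ : ℕ+ => LU)

/-- `last_stamp h = max ({0} ∪ dom h)`. -/
noncomputable def lastStamp (h : Hist) : ℕ := h.keys.sup (fun t => (t : ℕ))

/-- `last_op h` is `h (last_stamp h)` if `last_stamp h ≠ 0`, and `U` otherwise. -/
noncomputable def lastOp (h : Hist) : LU :=
  if hpos : 0 < lastStamp h then (h.lookup ⟨lastStamp h, hpos⟩).getD LU.U else LU.U

/-- `ω h` holds iff the last operation of `h` is a lock. -/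
noncomputable def omega (h : Hist) : Prop := lastOp h = LU.L

/-- `fresh h = 1 + last_stamp h`, as a positive timestamp. -/
noncomputable def freshStamp (h : Hist) : ℕ+ := ⟨lastStamp h + 1, Nat.succ_pos _⟩

/-- `x ⊥_ω y`. -/
noncomputable def sepOmega (x y : Hist) : Prop :=
  (omega x → lastStamp y < lastStamp x) ∧
  (omega y → lastStamp x < lastStamp y) ∧
  x.Disjoint y
/-- Ownership values: `own` and `ōwn` (not owned). -/
inductive Own | own | nown deriving DecidableEq
/-- The invariant `SpinCSLInv` of the combined Spin/CSLX resource on the tuple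
`(τ_s, τ_o, π_s, π_o, α_s, α_o)`. -/
noncomputable def SpinCSLInv (τs τo : Hist) (πs πo : ℕ) (αs αo : Own) : Prop :=
  (omega τs ↔ αs = Own.own) ∧
  (omega τo ↔ αo = Own.own) ∧
  (πs = if αs = Own.own then 1 else 0) ∧
  (πo = if αo = Own.own then 1 else 0) ∧
  sepOmega τs τo

/-! Before the transition `τ_s` is locked, so `τ_s ⊥_ω τ_o` forces
`last_stamp τ_o < last_stamp τ_s` and hence `τ_o` is unlocked. The fresh stamp of `τ_s ⊎ τ_o`
lies beyond both histories, so appending `U` there keeps `τ_s'` disjoint from `τ_o` and makes it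
end in an unlock. With neither side locked, `⊥_ω` reduces to disjointness, and the ownership and
permission components are updated consistently (`π_s = 1`, so `π_s - 1 = 0`). -/

theorem Finmap.singleton_disjoint_of_notMem {α : Type*} {β : α → Type*}
    {a : α} {b : β a} {t : Finmap β} (ha : a ∉ t) : (Finmap.singleton a b).Disjoint t := by
  intro x hx
  rw [Finmap.mem_singleton] at hx
  exact hx ▸ ha

lemma lastStamp_union (s t : Hist) :
    lastStamp (s ∪ t) = max (lastStamp s) (lastStamp t) := by
  simp [lastStamp, Finmap.keys_union, Finset.sup_union]

lemma lastStamp_singleton (a : ℕ+) (b : LU) : lastStamp (Finmap.singleton a b) = a := by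
  simp [lastStamp, Finmap.keys_singleton]

lemma le_lastStamp_of_mem {h : Hist} {t : ℕ+} (ht : t ∈ h) : (t : ℕ) ≤ lastStamp h :=
  Finset.le_sup (Finmap.mem_keys.mpr ht)

lemma notMem_of_lastStamp_lt {h : Hist} {t : ℕ+} (ht : lastStamp h < t) : t ∉ h :=
  fun hmem => (le_lastStamp_of_mem hmem).not_gt ht

lemma lastStamp_lt_freshStamp (h : Hist) : lastStamp h < freshStamp h :=
  Nat.lt_succ_self _

lemma lastStamp_union_singleton {h : Hist} {a : ℕ+} (ha : lastStamp h < a) (b : LU) :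
    lastStamp (h ∪ Finmap.singleton a b) = a := by
  rw [lastStamp_union, lastStamp_singleton]
  exact max_eq_right ha.le

lemma lastOp_union_singleton {h : Hist} {a : ℕ+} (ha : lastStamp h < a) (b : LU) :
    lastOp (h ∪ Finmap.singleton a b) = b := by
  have hlast := lastStamp_union_singleton ha b
  have hpos : 0 < lastStamp (h ∪ Finmap.singleton a b) := hlast ▸ a.pos
  have hkey : (⟨_, hpos⟩ : ℕ+) = a := PNat.coe_injective hlast
  rw [lastOp, dif_pos hpos, hkey, Finmap.lookup_union_right (notMem_of_lastStamp_lt ha),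
    Finmap.lookup_singleton_eq, Option.getD_some]

lemma not_omega_union_singleton_U {h : Hist} {a : ℕ+} (ha : lastStamp h < a) :
    ¬ omega (h ∪ Finmap.singleton a LU.U) := by
  simp [omega, lastOp_union_singleton ha]

lemma sepOmega.not_omega_right {x y : Hist} (hxy : sepOmega x y) (hx : omega x) : ¬ omega y :=
  fun hy => (hxy.1 hx).asymm (hxy.2.1 hy)

lemma sepOmega_of_not_omega {x y : Hist} (hx : ¬ omega x) (hy : ¬ omega y)
    (hxy : x.Disjoint y) : sepOmega x y :=
  ⟨fun h => absurd h hx, fun h => absurd h hy, hxy⟩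

theorem unlock_close_preserves_Inv_general (τs τo : Hist) (πs πo : ℕ) (αs αo : Own)
    (hInv : SpinCSLInv τs τo πs πo αs αo)
    (hα : αs = Own.own) :
    (τs ∪ Finmap.singleton (freshStamp (τs ∪ τo)) LU.U).Disjoint τo ∧
    SpinCSLInv (τs ∪ Finmap.singleton (freshStamp (τs ∪ τo)) LU.U) τo (πs - 1) πo Own.nown αo ∧
    sepOmega (τs ∪ Finmap.singleton (freshStamp (τs ∪ τo)) LU.U) τo := by
  obtain ⟨hωs_iff, hωo_iff, hπs, hπo, hsep⟩ := hInv
  have hωo : ¬ omega τo := hsep.not_omega_right (hωs_iff.2 hα)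
  have hfresh := lastStamp_lt_freshStamp (τs ∪ τo)
  rw [lastStamp_union, max_lt_iff] at hfresh
  have hdisj : (τs ∪ Finmap.singleton (freshStamp (τs ∪ τo)) LU.U).Disjoint τo :=
    (Finmap.disjoint_union_left _ _ _).2
      ⟨hsep.2.2, Finmap.singleton_disjoint_of_notMem (notMem_of_lastStamp_lt hfresh.2)⟩
  have hnωs' := not_omega_union_singleton_U (a := freshStamp (τs ∪ τo)) hfresh.1
  have hsep' := sepOmega_of_not_omega hnωs' hωo hdisj
  exact ⟨hdisj, ⟨iff_of_false hnωs' Own.noConfusion, hωo_iff, by simp [hπs, hα], hπo, hsep'⟩,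
    hsep'⟩

/-- the coupled unlock/close transition preserves `SpinCSLInv`:
if `SpinCSLInv` holds, `ω (τ_s ⊎ τ_o)` holds, `π_s > 0` and `α_s = own`, then the
post-state `τ_s' = τ_s ⊎ (fresh (τ_s ⊎ τ_o) ↦ U)`, `π_s' = π_s − 1`,
`α_s' = ōwn` (with `τ_o`, `π_o`, `α_o` unchanged) has `τ_s'` disjoint from
`τ_o` and satisfies `SpinCSLInv`; in particular `τ_s' ⊥_ω τ_o`. -/
theorem unlock_close_preserves_Inv (τs τo : Hist) (πs πo : ℕ) (αs αo : Own)
    (hInv : SpinCSLInv τs τo πs πo αs αo)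
    (hω : omega (τs ∪ τo)) (hπ : 0 < πs) (hα : αs = Own.own) :
    (τs ∪ Finmap.singleton (freshStamp (τs ∪ τo)) LU.U).Disjoint τo ∧
    SpinCSLInv (τs ∪ Finmap.singleton (freshStamp (τs ∪ τo)) LU.U) τo (πs - 1) πo Own.nown αo ∧
    sepOmega (τs ∪ Finmap.singleton (freshStamp (τs ∪ τo)) LU.U) τo :=
  unlock_close_preserves_Inv_general τs τo πs πo αs αo hInv hα
end
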